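/- Let B be an n×n real symmetric positive definite matrix. Then all generalized eigenvalues of the pencil (B, 𝓛(B)) lie in the half-open interval (0, 1], i.e. 0 < λ_k(B, 𝓛(B)) ≤ 1 for all k = 1, …, n. -/

import Mathlib

open Matrix

/-- The Euclidean norm of a vector. -/
noncomputable def enorm {m : Type*} [Fintype m] (v : m → ℝ) : ℝ :=
  Real.sqrt (∑ i, (v i) ^ 2)

/-- The square root of a positive semidefinite real matrix, as `Matrix.PosSemidef.sqrt` was
defined in older Mathlib. -/
noncomputable def psdSqrt {m : Type*} [Fintype m] [DecidableEq m] {A : Matrix m m ℝ}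
    (hA : A.PosSemidef) : Matrix m m ℝ :=
  (hA.1.eigenvectorUnitary : Matrix m m ℝ) * diagonal (Real.sqrt ∘ hA.1.eigenvalues) *
    (star (hA.1.eigenvectorUnitary : Matrix m m ℝ))

theorem psdSqrt_isHermitian {m : Type*} [Fintype m] [DecidableEq m] {A : Matrix m m ℝ}
    (hA : A.PosSemidef) : (psdSqrt hA).IsHermitian := by
  show (psdSqrt hA)ᴴ = psdSqrt hA
  simp only [psdSqrt, conjTranspose_mul, star_eq_conjTranspose, conjTranspose_conjTranspose,
    diagonal_conjTranspose, star_trivial, Matrix.mul_assoc]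

/-- The `k`-th smallest generalized eigenvalue (counted with multiplicity) of the
symmetric pencil `(A, B)` with `B` positive definite, i.e. the `k`-th smallest root of
`det (A - λ B) = 0`.  It is defined as the `k`-th smallest eigenvalue of the Hermitian
matrix `√(B⁻¹) * A * √(B⁻¹)`, which is similar to `B⁻¹ * A`.  Junk value `0` is returned
if `A` is not symmetric or `B` is not positive definite. -/
noncomputable def genEig {m : Type*} [Fintype m] [DecidableEq m]
    (A B : Matrix m m ℝ) (k : Fin (Fintype.card m)) : ℝ :=
  letI := Classical.propDecidable
  if h : A.IsHermitian ∧ B.PosDef then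
    let S : Matrix m m ℝ := psdSqrt (h.2.inv).posSemidef
    have hS : S.IsHermitian := psdSqrt_isHermitian (h.2.inv).posSemidef
    have hC : (S * A * S).IsHermitian := by
      show (S * A * S)ᴴ = S * A * S
      rw [conjTranspose_mul, conjTranspose_mul, hS.eq, h.1.eq, Matrix.mul_assoc]
    let f : Fin (Fintype.card m) → ℝ := hC.eigenvalues₀
    f (Tuple.sort f k)
  else 0

/-- The `k`-th smallest generalized eigenvalue of a pencil of `n × n` matrices,
indexed by `Fin n`.  `genEigFin A B 0` is the smallest one, `λ_1(A,B)`, and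
`genEigFin A B (Fin.last _)` is the largest one, `λ_n(A,B)`. -/
noncomputable def genEigFin {n : ℕ} (A B : Matrix (Fin n) (Fin n) ℝ) (k : Fin n) : ℝ :=
  genEig A B (Fin.cast (Fintype.card_fin n).symm k)

/-- The (row-sum) lumping operator: `lump B` is the diagonal matrix whose `i`-th
diagonal entry is the sum of the absolute values of the entries of the `i`-th row of `B`. -/
noncomputable def lump {m : Type*} [Fintype m] [DecidableEq m]
    (B : Matrix m m ℝ) : Matrix m m ℝ :=
  Matrix.diagonal fun i => ∑ j, |B i j|

/-- The banded part `D_i` of a matrix: it keeps all sub- and super-diagonals of index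
smaller than `i` (i.e. the entries with `|j - k| < i`) and sets the rest to zero. -/
def diagBand {n : ℕ} (B : Matrix (Fin n) (Fin n) ℝ) (i : ℕ) : Matrix (Fin n) (Fin n) ℝ :=
  Matrix.of fun j k => if |((j : ℕ) : ℤ) - ((k : ℕ) : ℤ)| < (i : ℤ) then B j k else 0

/-- The lumped preconditioner `P_i = D_i + 𝓛(R_i)` where `B = D_i + R_i`, `D_i` being the
banded part of `B` of bandwidth `i` and `R_i` the remainder. -/
noncomputable def precond {n : ℕ} (B : Matrix (Fin n) (Fin n) ℝ) (i : ℕ) :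
    Matrix (Fin n) (Fin n) ℝ :=
  diagBand B i + lump (B - diagBand B i)

/-! Writing `L = 𝓛(B)`, the Gershgorin-type estimate `2 bᵢⱼ xᵢ xⱼ ≤ |bᵢⱼ| (xᵢ² + xⱼ²)`,
summed over `i, j` with the symmetry of `B`, shows `L - B ⪰ 0`; hence `L ≻ 0` as well.
A generalized eigenvalue `μ` has an eigenvector `w ≠ 0` with `B w = μ L w`, so
`μ = wᵀBw / wᵀLw`, which is positive since `B ≻ 0` and at most `1` since `wᵀBw ≤ wᵀLw`. -/

theorem lump_sub_posSemidef {m : Type*} [Fintype m] [DecidableEq m] {B : Matrix m m ℝ}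
    (hB : B.IsHermitian) : (lump B - B).PosSemidef := by
  refine .of_dotProduct_mulVec_nonneg ((isHermitian_diagonal _).sub hB) fun x => ?_
  have hsymm : ∀ i j, B j i = B i j := hB.apply
  have hlump : x ⬝ᵥ lump B *ᵥ x = ∑ i, ∑ j, |B i j| * x i ^ 2 := by
    simp only [lump, dotProduct, mulVec_diagonal, Finset.mul_sum, Finset.sum_mul]
    exact Finset.sum_congr rfl fun i _ => Finset.sum_congr rfl fun j _ => by ring
  have hlump_swap : ∑ i, ∑ j, |B i j| * x i ^ 2 = ∑ i, ∑ j, |B i j| * x j ^ 2 := by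
    rw [Finset.sum_comm]
    simp only [hsymm]
  have hterm : ∀ i j, 2 * (x i * (B i j * x j)) ≤ |B i j| * x i ^ 2 + |B i j| * x j ^ 2 :=
    fun i j => by
      nlinarith [le_abs_self (B i j), neg_abs_le (B i j), sq_nonneg (x i - x j),
        sq_nonneg (x i + x j), abs_nonneg (B i j)]
  have hsum : 2 * (x ⬝ᵥ B *ᵥ x) ≤ 2 * (x ⬝ᵥ lump B *ᵥ x) := by
    calc 2 * (x ⬝ᵥ B *ᵥ x) = ∑ i, ∑ j, 2 * (x i * (B i j * x j)) := by
          simp only [dotProduct, mulVec, Finset.mul_sum]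
      _ ≤ ∑ i, ∑ j, (|B i j| * x i ^ 2 + |B i j| * x j ^ 2) :=
          Finset.sum_le_sum fun i _ => Finset.sum_le_sum fun j _ => hterm i j
      _ = 2 * (x ⬝ᵥ lump B *ᵥ x) := by
          simp only [Finset.sum_add_distrib, ← hlump_swap, hlump]; ring
  simp only [star_trivial, sub_mulVec, dotProduct_sub]
  linarith

theorem lump_posDef {m : Type*} [Fintype m] [DecidableEq m] {B : Matrix m m ℝ}
    (hB : B.PosDef) : (lump B).PosDef := by
  simpa using hB.add_posSemidef (lump_sub_posSemidef hB.isHermitian)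

theorem psdSqrt_mul_self {m : Type*} [Fintype m] [DecidableEq m] {A : Matrix m m ℝ}
    (hA : A.PosSemidef) : psdSqrt hA * psdSqrt hA = A := by
  set U : Matrix m m ℝ := (hA.1.eigenvectorUnitary : Matrix m m ℝ)
  have hU : star U * U = 1 := Unitary.coe_star_mul_self _
  have hD : diagonal (Real.sqrt ∘ hA.1.eigenvalues) * diagonal (Real.sqrt ∘ hA.1.eigenvalues)
      = diagonal (RCLike.ofReal ∘ hA.1.eigenvalues) := by
    simp [diagonal_mul_diagonal, Function.comp_def, Real.mul_self_sqrt (hA.eigenvalues_nonneg _)]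
  calc psdSqrt hA * psdSqrt hA
      = U * (diagonal (Real.sqrt ∘ hA.1.eigenvalues) * (star U * U)
          * diagonal (Real.sqrt ∘ hA.1.eigenvalues)) * star U := by
        simp only [psdSqrt, U, Matrix.mul_assoc]
    _ = A := by
        rw [hU, Matrix.mul_one, hD]
        have := hA.1.spectral_theorem
        rw [Unitary.conjStarAlgAut_apply] at this
        exact this.symm

theorem exists_mulVec_eq_eigenvalues₀_smul {m : Type*} [Fintype m] [DecidableEq m]
    {A M S : Matrix m m ℝ} (hMS : M * S * S = 1) (hC : (S * A * S).IsHermitian)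
    (j : Fin (Fintype.card m)) : ∃ w ≠ 0, A *ᵥ w = hC.eigenvalues₀ j • M *ᵥ w := by
  set i := Fintype.equivOfCardEq (Fintype.card_fin _) j
  have heig : hC.eigenvalues i = hC.eigenvalues₀ j := by
    simp [Matrix.IsHermitian.eigenvalues, i]
  set v : m → ℝ := ⇑(hC.eigenvectorBasis i)
  have hv : v ≠ 0 := by
    simpa [v] using hC.eigenvectorBasis.orthonormal.ne_zero i
  have hCv : (S * A * S) *ᵥ v = hC.eigenvalues₀ j • v := by
    rw [hC.mulVec_eigenvectorBasis i, heig]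
  refine ⟨S *ᵥ v, fun h => hv ?_, ?_⟩
  · rw [← one_mulVec v, ← hMS, ← mulVec_mulVec, h, mulVec_zero]
  · calc A *ᵥ (S *ᵥ v) = (M * S * S) *ᵥ (A *ᵥ (S *ᵥ v)) := by rw [hMS, one_mulVec]
      _ = (M * S) *ᵥ ((S * A * S) *ᵥ v) := by simp only [mulVec_mulVec, Matrix.mul_assoc]
      _ = hC.eigenvalues₀ j • M *ᵥ (S *ᵥ v) := by
        rw [hCv, mulVec_smul, mulVec_mulVec]

theorem exists_mulVec_eq_genEig_smul {m : Type*} [Fintype m] [DecidableEq m]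
    {A M : Matrix m m ℝ} (hA : A.IsHermitian) (hM : M.PosDef) (k : Fin (Fintype.card m)) :
    ∃ w ≠ 0, A *ᵥ w = genEig A M k • M *ᵥ w := by
  rw [genEig, dif_pos ⟨hA, hM⟩]
  -- `genEig` is built with the classical decidability instance, so the lemmas below must be too
  let : DecidableEq m := fun a b => Classical.propDecidable (a = b)
  refine exists_mulVec_eq_eigenvalues₀_smul ?_ _ _
  rw [Matrix.mul_assoc, psdSqrt_mul_self,
    mul_nonsing_inv _ ((isUnit_iff_isUnit_det M).mp hM.isUnit)]

theorem mem_Ioc_of_mulVec_eq_smul {m : Type*} [Fintype m] {A M : Matrix m m ℝ}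
    (hA : A.PosDef) (hMA : (M - A).PosSemidef) {w : m → ℝ} (hw : w ≠ 0) {μ : ℝ}
    (h : A *ᵥ w = μ • M *ᵥ w) : μ ∈ Set.Ioc 0 1 := by
  have hAw : 0 < w ⬝ᵥ A *ᵥ w := by simpa using hA.dotProduct_mulVec_pos hw
  have hAM : w ⬝ᵥ A *ᵥ w ≤ w ⬝ᵥ M *ᵥ w := by
    simpa [sub_mulVec, dotProduct_sub] using hMA.dotProduct_mulVec_nonneg w
  have hμ : w ⬝ᵥ A *ᵥ w = μ * (w ⬝ᵥ M *ᵥ w) := by rw [h, dotProduct_smul, smul_eq_mul]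
  have hMw : 0 < w ⬝ᵥ M *ᵥ w := hAw.trans_le hAM
  exact ⟨by nlinarith, by nlinarith⟩

/-- for SPD `B`, all generalized eigenvalues of `(B, 𝓛(B))` lie in `(0, 1]`. -/
theorem stmt_6 {n : ℕ} (B : Matrix (Fin n) (Fin n) ℝ) (hB : B.PosDef) :
    ∀ k : Fin n, 0 < genEigFin B (lump B) k ∧ genEigFin B (lump B) k ≤ 1 := by
  intro k
  obtain ⟨w, hw, hBw⟩ := exists_mulVec_eq_genEig_smul hB.isHermitian (lump_posDef hB)
    (Fin.cast (Fintype.card_fin n).symm k)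
  exact mem_Ioc_of_mulVec_eq_smul hB (lump_sub_posSemidef hB.isHermitian) hw hBw
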